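/- Let χ be a compact subset of ℝ^d, let σ : ℝ → ℝ be continuous, and fix r ≥ 1, V ≥ 4, M > 0. Then the class F(r, V, M) = { x ↦ α₀ + Σ_{j=1}^{r} α_j σ(γ_jᵀ x + γ_{0,j}) : γ_j ∈ ℝ^d, α_j, γ_{0,j} ∈ ℝ, Σ_{j=0}^{r} |α_j| ≤ V, max_{1≤j≤r} Σ_{i=0}^{d} |γ_{i,j}| ≤ M }, viewed as a subset of the space C(χ) of continuous real-valued functions on χ with the supremum norm, is compact. -/

import Mathlib

/-!
The class is the image of a parameter set under a map into `C(χ, ℝ)`. The parameter set is a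
product of `ℓ¹`-balls in finite-dimensional spaces, hence compact, and the network, as a function
of parameters and input jointly, is continuous because `σ` is; currying makes the map
parameters ↦ network continuous, and continuous images of compact sets are compact.
-/

open Finset

section ShallowNet

variable {ι κ : Type*} [Fintype ι] [Fintype κ]

theorem isCompact_setOf_abs_add_sum_abs_le (C : ℝ) :
    IsCompact {p : ℝ × (ι → ℝ) | |p.1| + ∑ i, |p.2 i| ≤ C} := by
  have hclosed : IsClosed {p : ℝ × (ι → ℝ) | |p.1| + ∑ i, |p.2 i| ≤ C} :=
    isClosed_le (by fun_prop) continuous_const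
  refine ((isCompact_Icc (a := -|C|) (b := |C|)).prod
    (isCompact_univ_pi fun _ : ι => isCompact_Icc (a := -|C|) (b := |C|))).of_isClosed_subset
    hclosed ?_
  rintro ⟨a, v⟩ (h : |a| + ∑ i, |v i| ≤ C)
  have hsum : 0 ≤ ∑ i, |v i| := sum_nonneg fun i _ => abs_nonneg (v i)
  have hC : C ≤ |C| := le_abs_self C
  refine ⟨abs_le.mp (by linarith), fun i _ => abs_le.mp ?_⟩
  have hi : |v i| ≤ ∑ i, |v i| := single_le_sum (fun i _ => abs_nonneg (v i)) (mem_univ i)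
  linarith [abs_nonneg a]

/-- The parameters are `((α₀, α), fun j => (γ₀ j, γ j))`. -/
def shallowNet (σ : ℝ → ℝ) (p : (ℝ × (ι → ℝ)) × (ι → ℝ × (κ → ℝ))) (x : κ → ℝ) : ℝ :=
  p.1.1 + ∑ j, p.1.2 j * σ (∑ i, (p.2 j).2 i * x i + (p.2 j).1)

theorem continuous_shallowNet {σ : ℝ → ℝ} (hσ : Continuous σ) :
    Continuous fun q : ((ℝ × (ι → ℝ)) × (ι → ℝ × (κ → ℝ))) × (κ → ℝ) =>
      shallowNet σ q.1 q.2 := by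
  unfold shallowNet
  fun_prop

end ShallowNet

theorem nnClass_isCompact_general
    (d r : ℕ) (V M : ℝ)
    (σ : ℝ → ℝ) (hσ : Continuous σ)
    (χ : Set (Fin d → ℝ)) :
    IsCompact {F : C(χ, ℝ) |
      ∃ (α₀ : ℝ) (α : Fin r → ℝ) (γ₀ : Fin r → ℝ) (γ : Fin r → Fin d → ℝ),
        (∀ x : χ, F x = α₀ + ∑ j, α j * σ (∑ i, γ j i * (x : Fin d → ℝ) i + γ₀ j)) ∧
        |α₀| + ∑ j, |α j| ≤ V ∧
        ∀ j, |γ₀ j| + ∑ i, |γ j i| ≤ M} := by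
  let Φ : C((ℝ × (Fin r → ℝ)) × (Fin r → ℝ × (Fin d → ℝ)), C(χ, ℝ)) :=
    ContinuousMap.curry ⟨fun q => shallowNet σ q.1 q.2,
      (continuous_shallowNet hσ).comp (continuous_fst.prodMk continuous_snd.subtype_val)⟩
  have hK := (isCompact_setOf_abs_add_sum_abs_le (ι := Fin r) V).prod
    (isCompact_univ_pi fun _ : Fin r => isCompact_setOf_abs_add_sum_abs_le (ι := Fin d) M)
  convert hK.image Φ.continuous using 1
  ext F
  constructor
  · rintro ⟨α₀, α, γ₀, γ, hF, hα, hγ⟩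
    exact ⟨((α₀, α), fun j => (γ₀ j, γ j)), ⟨hα, fun j _ => hγ j⟩,
      ContinuousMap.ext fun x => (hF x).symm⟩
  · rintro ⟨⟨⟨α₀, α⟩, γ⟩, ⟨hα, hγ⟩, rfl⟩
    exact ⟨α₀, α, fun j => (γ j).1, fun j => (γ j).2, fun _ => rfl, hα, fun j => hγ j trivial⟩

/-- On a compact `χ ⊆ ℝ^d`, for continuous `σ`, `r ≥ 1`, `V ≥ 4`, `M > 0`,
the class `F(r, V, M)` of one-hidden-layer networks
`x ↦ α₀ + Σ_{j=1}^r α_j σ(γ_jᵀ x + γ_{0,j})` with `Σ_{j=0}^r |α_j| ≤ V` and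
`max_{1≤j≤r} Σ_{i=0}^d |γ_{i,j}| ≤ M`, viewed as a subset of `C(χ)` with the supremum norm,
is compact. -/
theorem nnClass_isCompact
    (d r : ℕ) (hd : 1 ≤ d) (hr : 1 ≤ r) (V M : ℝ) (hV : 4 ≤ V) (hM : 0 < M)
    (σ : ℝ → ℝ) (hσ : Continuous σ)
    (χ : Set (Fin d → ℝ)) (hχ : IsCompact χ) :
    IsCompact {F : C(χ, ℝ) |
      ∃ (α₀ : ℝ) (α : Fin r → ℝ) (γ₀ : Fin r → ℝ) (γ : Fin r → Fin d → ℝ),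
        (∀ x : χ, F x = α₀ + ∑ j, α j * σ (∑ i, γ j i * (x : Fin d → ℝ) i + γ₀ j)) ∧
        |α₀| + ∑ j, |α j| ≤ V ∧
        ∀ j, |γ₀ j| + ∑ i, |γ j i| ≤ M} :=
  nnClass_isCompact_general d r V M σ hσ χ
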